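/- With J and r_θ as in the KL-regularized objective on a finite set Y, the gradient of J can be written in symmetric pairwise form: ∇_θ J(θ) = (1/(2β))·Σ_{y^a, y^b} π_θ(y^a)π_θ(y^b)·[(r*(y^a) - r*(y^b)) - (r_θ(y^a) - r_θ(y^b))]·[∇_θ r_θ(y^a) - ∇_θ r_θ(y^b)]. -/

import Mathlib

/-!
Write `g y` for the gradient of `π_θ(y)`. Since `Σ_y π_θ(y) = 1`, `Σ_y g y = 0`, which kills the
`β·Σ_y g y` coming from differentiating the KL term, so `∇J = Σ_y (r*(y) - r_θ(y))·g y`.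
The score identity `π_θ(y)·∇r_θ(y) = β·g y` turns this into `(1/β)·Σ_y π_θ(y)·A(y)·∇r_θ(y)` with
`A = r* - r_θ`, and the pairwise double sum is twice the covariance of `A` and `∇r_θ` under `π_θ`,
whose mean term vanishes because `Σ_y π_θ(y)·∇r_θ(y) = β·Σ_y g y = 0`.
-/

open Finset

theorem sum_sum_mul_sub_smul_sub {R M Y : Type*} [CommRing R] [AddCommGroup M] [Module R M]
    [Fintype Y] (p A : Y → R) (h : Y → M) :
    ∑ a, ∑ b, (p a * p b * (A a - A b)) • (h a - h b) =
      (2 : R) • ((∑ y, p y) • ∑ y, (p y * A y) • h y - (∑ y, p y * A y) • ∑ y, p y • h y) := by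
  have expand : ∀ a b, (p a * p b * (A a - A b)) • (h a - h b) =
      p b • (p a * A a) • h a - (p b * A b) • p a • h a
        - ((p a * A a) • p b • h b - p a • (p b * A b) • h b) := by
    intro a b
    simp only [smul_smul, mul_sub, sub_smul, smul_sub]
    ring_nf
  simp only [expand, sum_sub_distrib, ← sum_smul, ← smul_sum]
  rw [two_smul]
  abel

theorem sum_sum_mul_sub_smul_sub_of_smul_eq {M Y : Type*} [AddCommGroup M] [Module ℝ M]
    [Fintype Y] {β : ℝ} (hβ : β ≠ 0) (p A : Y → ℝ) {g h : Y → M} (hp : ∑ y, p y = 1)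
    (hg : ∑ y, g y = 0) (hpg : ∀ y, p y • h y = β • g y) :
    (1 / (2 * β)) • ∑ a, ∑ b, (p a * p b * (A a - A b)) • (h a - h b) = ∑ y, A y • g y := by
  have hmean : ∑ y, p y • h y = 0 := by simp only [hpg, ← smul_sum, hg, smul_zero]
  have hcross : ∑ y, (p y * A y) • h y = β • ∑ y, A y • g y := by
    simp only [smul_sum, mul_comm (p _), mul_smul, hpg, smul_comm β]
  rw [sum_sum_mul_sub_smul_sub, hp, hmean, hcross, smul_zero, sub_zero, one_smul, smul_smul,
    smul_smul, one_div, mul_assoc, inv_mul_cancel₀ (mul_ne_zero two_ne_zero hβ), one_smul]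

section Derivatives

variable {E : Type*} [NormedAddCommGroup E] [NormedSpace ℝ E] {f : E → ℝ} {f' : E →L[ℝ] ℝ}
  {x : E} {c : ℝ}

theorem HasFDerivAt.log_div_const (hf : HasFDerivAt f f' x) (hx : f x ≠ 0) (hc : c ≠ 0) :
    HasFDerivAt (fun x => Real.log (f x / c)) ((f x)⁻¹ • f') x := by
  simp only [div_eq_mul_inv]
  refine ((hf.mul_const c⁻¹).log (mul_ne_zero hx (inv_ne_zero hc))).congr_fderiv ?_
  rw [smul_smul, mul_inv, inv_inv, mul_assoc, mul_inv_cancel₀ hc, mul_one]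

theorem HasFDerivAt.mul_log_div_const (hf : HasFDerivAt f f' x) (hx : f x ≠ 0) (hc : c ≠ 0) :
    HasFDerivAt (fun x => f x * Real.log (f x / c)) ((Real.log (f x / c) + 1) • f') x := by
  refine (hf.mul (hf.log_div_const hx hc)).congr_fderiv ?_
  rw [smul_smul, mul_inv_cancel₀ hx, add_smul, one_smul, add_comm]

theorem hasFDerivAt_sum_mul_sub_kl {Y : Type*} [Fintype Y] {π : E → Y → ℝ} {g : Y → E →L[ℝ] ℝ}
    (hπ : ∀ y, HasFDerivAt (fun x => π x y) (g y) x) (hπx : ∀ y, π x y ≠ 0)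
    (hg : ∑ y, g y = 0) {πref : Y → ℝ} (hπref : ∀ y, πref y ≠ 0) (r : Y → ℝ) (β : ℝ) :
    HasFDerivAt (fun x => (∑ y, π x y * r y) - β * ∑ y, π x y * Real.log (π x y / πref y))
      (∑ y, (r y - β * Real.log (π x y / πref y)) • g y) x := by
  refine ((HasFDerivAt.fun_sum fun y _ => (hπ y).mul_const (r y)).sub
    ((HasFDerivAt.fun_sum fun y _ =>
      (hπ y).mul_log_div_const (hπx y) (hπref y)).const_mul β)).congr_fderiv ?_
  simp only [add_smul, one_smul, sum_add_distrib, hg, add_zero, smul_sum, smul_smul,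
    ← sum_sub_distrib, ← sub_smul]

end Derivatives

/-- Symmetric pairwise form of the gradient of the KL-regularized objective:
`∇_θ J(θ) = (1/(2β))·Σ_{yᵃ,yᵇ} π_θ(yᵃ)π_θ(yᵇ)·[(r*(yᵃ)-r*(yᵇ)) - (r_θ(yᵃ)-r_θ(yᵇ))]
· [∇_θ r_θ(yᵃ) - ∇_θ r_θ(yᵇ)]`. -/
theorem objective_gradient_pairwise (d : ℕ) {Y : Type*} [Fintype Y]
    (π : (Fin d → ℝ) → Y → ℝ) (πref : Y → ℝ) (rstar : Y → ℝ) (β : ℝ) (hβ : 0 < β)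
    (hpos : ∀ θ y, 0 < π θ y) (hrefpos : ∀ y, 0 < πref y)
    (hsum : ∀ θ, ∑ y, π θ y = 1)
    (hdiff : ∀ y, Differentiable ℝ (fun θ => π θ y))
    (θ : Fin d → ℝ) :
    fderiv ℝ (fun θ' => (∑ y : Y, π θ' y * rstar y) -
        β * ∑ y : Y, π θ' y * Real.log (π θ' y / πref y)) θ =
      (1 / (2 * β)) •
        ∑ ya : Y, ∑ yb : Y,
          (π θ ya * π θ yb *
            ((rstar ya - rstar yb) -
              (β * Real.log (π θ ya / πref ya) - β * Real.log (π θ yb / πref yb)))) •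
          (fderiv ℝ (fun θ' => β * Real.log (π θ' ya / πref ya)) θ -
            fderiv ℝ (fun θ' => β * Real.log (π θ' yb / πref yb)) θ) := by
  set g := fun y => fderiv ℝ (fun θ' => π θ' y) θ
  have hg : ∀ y, HasFDerivAt (fun θ' => π θ' y) (g y) θ := fun y => (hdiff y θ).hasFDerivAt
  have hg_sum : ∑ y, g y = 0 := by
    have h := HasFDerivAt.fun_sum (u := univ) fun y _ => hg y
    simp only [hsum] at h
    exact h.unique (hasFDerivAt_const 1 θ)
  have hscore : ∀ y, π θ y • fderiv ℝ (fun θ' => β * Real.log (π θ' y / πref y)) θ = β • g y := by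
    intro y
    rw [(((hg y).log_div_const (hpos θ y).ne' (hrefpos y).ne').const_mul β).fderiv, smul_smul,
      smul_smul, mul_right_comm, mul_inv_cancel₀ (hpos θ y).ne', one_mul]
  simp only [fun a b => sub_sub_sub_comm (rstar a) (rstar b)]
  rw [sum_sum_mul_sub_smul_sub_of_smul_eq hβ.ne' (π θ) (fun y => rstar y - _) (hsum θ) hg_sum
    hscore]
  exact (hasFDerivAt_sum_mul_sub_kl hg (fun y => (hpos θ y).ne') hg_sum
    (fun y => (hrefpos y).ne') rstar β).fderiv
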